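/- Let f : ℝ^{m×n} → ℝ be differentiable with β-Lipschitz gradient (β-smooth) and suppose f(W^(1)) − inf f ≤ M. Fix Q ∈ ℝ^{m×r} with orthonormal columns and for t = 1, …, T set Ĝ^(t) = Qᵀ∇f(W^(t)), let O^(t) ∈ ℝ^{r×n} satisfy ‖O^(t)‖_F² ≤ n, and update W^(t+1) = W^(t) − η Q O^(t) with constant step size η > 0. Assume at each step (i) −⟨Ĝ^(t), O^(t)⟩_F ≤ −¼‖Ĝ^(t)‖_F² + (5/2)‖Ĝ^(t) − M^(t)‖_F for the low-rank momentum M^(t), and (ii) ‖Ĝ^(t) − M^(t)‖_F ≤ σ/√m. Then (1/T) Σ_{t=1}^{T} ‖Ĝ^(t)‖_F² ≤ 4M/(ηT) + 10σ/√m + 2ηβn. -/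

import Mathlib

/-!
One step `W ↦ W - η Q O` of a β-smooth `f` decreases it by `η ⟨Qᵀ∇f(W), O⟩` up to the
curvature term `β η² ‖O‖² / 2` (descent lemma; `Q` is an isometry). The alignment and noise
assumptions turn the decrease into `η ‖Ĝ‖² / 4 − (5/2) η σ/√m`; summing over `t` telescopes
`f(W^(1)) − f(W^(T+1)) ≤ M`, and dividing by `ηT/4` gives the average bound.
-/

open Matrix Finset

/-- Frobenius inner product `⟨A,B⟩_F = tr(AᵀB)`. -/
noncomputable def frobInner {n m : ℕ} (A B : Matrix (Fin n) (Fin m) ℝ) : ℝ :=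
  (Aᵀ * B).trace

/-- Frobenius norm. -/
noncomputable def frobNorm {n m : ℕ} (A : Matrix (Fin n) (Fin m) ℝ) : ℝ :=
  Real.sqrt (frobInner A A)

section Frobenius

variable {k l : ℕ}

lemma frobInner_eq_sum (A B : Matrix (Fin k) (Fin l) ℝ) :
    frobInner A B = ∑ p : Fin l × Fin k, A p.2 p.1 * B p.2 p.1 := by
  simp only [frobInner, Matrix.trace, Matrix.diag, Matrix.mul_apply, Matrix.transpose_apply]
  rw [← Finset.sum_product']
  rfl

lemma frobInner_smul_right (c : ℝ) (A B : Matrix (Fin k) (Fin l) ℝ) :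
    frobInner A (c • B) = c * frobInner A B := by
  simp [frobInner, Matrix.mul_smul, Matrix.trace_smul]

lemma frobInner_sub_left (A B C : Matrix (Fin k) (Fin l) ℝ) :
    frobInner (A - B) C = frobInner A C - frobInner B C := by
  simp [frobInner, Matrix.sub_mul, Matrix.trace_sub]

lemma frobInner_le_frobNorm_mul_frobNorm (A B : Matrix (Fin k) (Fin l) ℝ) :
    frobInner A B ≤ frobNorm A * frobNorm B := by
  simp only [frobNorm, frobInner_eq_sum, ← pow_two]
  exact Real.sum_mul_le_sqrt_mul_sqrt _ _ _

lemma frobNorm_smul (c : ℝ) (A : Matrix (Fin k) (Fin l) ℝ) :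
    frobNorm (c • A) = |c| * frobNorm A := by
  have h : frobInner (c • A) (c • A) = c ^ 2 * frobInner A A := by
    simp [frobInner, Matrix.mul_smul, Matrix.smul_mul, Matrix.trace_smul, pow_two, mul_assoc]
  rw [frobNorm, h, Real.sqrt_mul (sq_nonneg c), Real.sqrt_sq_eq_abs, frobNorm]

lemma frobInner_mul_right {r : ℕ} (A : Matrix (Fin k) (Fin l) ℝ)
    (Q : Matrix (Fin k) (Fin r) ℝ) (B : Matrix (Fin r) (Fin l) ℝ) :
    frobInner A (Q * B) = frobInner (Qᵀ * A) B := by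
  simp [frobInner, Matrix.transpose_mul, Matrix.mul_assoc]

lemma frobNorm_mul_of_transpose_mul_self_eq_one {r : ℕ} {Q : Matrix (Fin k) (Fin r) ℝ}
    (hQ : Qᵀ * Q = 1) (B : Matrix (Fin r) (Fin l) ℝ) : frobNorm (Q * B) = frobNorm B := by
  rw [frobNorm, frobNorm, frobInner, Matrix.transpose_mul, Matrix.mul_assoc,
    ← Matrix.mul_assoc Qᵀ, hQ, Matrix.one_mul, frobInner]

end Frobenius

lemma hasDerivAt_add_smul_of_hasDerivAt_zero {E : Type*} [AddCommGroup E] [Module ℝ E]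
    {f : E → ℝ} {D : E → E → ℝ}
    (hD : ∀ X V, HasDerivAt (fun s : ℝ => f (X + s • V)) (D X V) 0) (X V : E) (s₀ : ℝ) :
    HasDerivAt (fun s : ℝ => f (X + s • V)) (D (X + s₀ • V) V) s₀ := by
  have h := hD (X + s₀ • V) V
  rw [← sub_self s₀] at h
  refine (h.comp_sub_const s₀ s₀).congr_of_eventuallyEq (Filter.Eventually.of_forall fun s => ?_)
  simp only [add_assoc, ← add_smul, add_sub_cancel]

lemma image_one_le_of_deriv_sub_deriv_zero_le {φ φ' : ℝ → ℝ} {L : ℝ}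
    (hφ : ∀ s, HasDerivAt φ (φ' s) s) (hφ' : ∀ s ∈ Set.Ioo (0 : ℝ) 1, φ' s - φ' 0 ≤ L * s) :
    φ 1 ≤ φ 0 + φ' 0 + L / 2 := by
  let ψ : ℝ → ℝ := fun s => φ s - s * φ' 0 - L / 2 * s ^ 2
  have hψ : ∀ s, HasDerivAt ψ (φ' s - φ' 0 - L * s) s := fun s =>
    (((hφ s).sub (hasDerivAt_mul_const (φ' 0))).sub
      ((hasDerivAt_pow 2 s).const_mul (L / 2))).congr_deriv (by push_cast; ring)
  have hanti : AntitoneOn ψ (Set.Icc 0 1) := by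
    refine antitoneOn_of_deriv_nonpos (convex_Icc 0 1)
      (fun s _ => (hψ s).continuousAt.continuousWithinAt)
      (fun s _ => (hψ s).differentiableAt.differentiableWithinAt) fun s hs => ?_
    rw [interior_Icc] at hs
    rw [(hψ s).deriv]
    linarith [hφ' s hs]
  have h01 := hanti (Set.left_mem_Icc.2 zero_le_one) (Set.right_mem_Icc.2 zero_le_one) zero_le_one
  simp only [ψ] at h01
  linarith

section Smooth

variable {m n : ℕ} {f : Matrix (Fin m) (Fin n) ℝ → ℝ}
  {gradf : Matrix (Fin m) (Fin n) ℝ → Matrix (Fin m) (Fin n) ℝ} {β : ℝ}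

lemma apply_add_le_of_gradient_lipschitz
    (hgrad : ∀ W V, HasDerivAt (fun s : ℝ => f (W + s • V)) (frobInner (gradf W) V) 0)
    (hsmooth : ∀ X Y, frobNorm (gradf X - gradf Y) ≤ β * frobNorm (X - Y))
    (X V : Matrix (Fin m) (Fin n) ℝ) :
    f (X + V) ≤ f X + frobInner (gradf X) V + β / 2 * frobNorm V ^ 2 := by
  have h := image_one_le_of_deriv_sub_deriv_zero_le (L := β * frobNorm V ^ 2)
    (hasDerivAt_add_smul_of_hasDerivAt_zero hgrad X V) fun s hs => ?_
  · simpa [mul_div_right_comm] using h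
  have hLip := hsmooth (X + s • V) X
  rw [add_sub_cancel_left, frobNorm_smul, abs_of_pos hs.1] at hLip
  calc frobInner (gradf (X + s • V)) V - frobInner (gradf (X + (0 : ℝ) • V)) V
      = frobInner (gradf (X + s • V) - gradf X) V := by rw [zero_smul, add_zero, frobInner_sub_left]
    _ ≤ frobNorm (gradf (X + s • V) - gradf X) * frobNorm V :=
      frobInner_le_frobNorm_mul_frobNorm _ _
    _ ≤ β * (s * frobNorm V) * frobNorm V :=
      mul_le_mul_of_nonneg_right hLip (Real.sqrt_nonneg _)
    _ = β * frobNorm V ^ 2 * s := by ring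

lemma apply_sub_smul_mul_le_of_gradient_lipschitz {r : ℕ}
    (hgrad : ∀ W V, HasDerivAt (fun s : ℝ => f (W + s • V)) (frobInner (gradf W) V) 0)
    (hsmooth : ∀ X Y, frobNorm (gradf X - gradf Y) ≤ β * frobNorm (X - Y))
    {Q : Matrix (Fin m) (Fin r) ℝ} (hQ : Qᵀ * Q = 1)
    (X : Matrix (Fin m) (Fin n) ℝ) (O : Matrix (Fin r) (Fin n) ℝ) (η : ℝ) :
    f (X - η • (Q * O)) ≤
      f X - η * frobInner (Qᵀ * gradf X) O + β / 2 * η ^ 2 * frobNorm O ^ 2 := by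
  have h := apply_add_le_of_gradient_lipschitz hgrad hsmooth X ((-η) • (Q * O))
  rw [frobInner_smul_right, frobInner_mul_right, frobNorm_smul, abs_neg,
    frobNorm_mul_of_transpose_mul_self_eq_one hQ, neg_smul, ← sub_eq_add_neg, mul_pow, sq_abs] at h
  linarith

end Smooth

lemma mul_sum_Icc_le_of_le_sub_mul_add {a b : ℕ → ℝ} {c C : ℝ} (T : ℕ)
    (h : ∀ t ∈ Icc 1 T, a (t + 1) ≤ a t - c * b t + C) :
    c * ∑ t ∈ Icc 1 T, b t ≤ a 1 - a (T + 1) + T * C := by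
  induction T with
  | zero => simp
  | succ T ih =>
    rw [sum_Icc_succ_top (by omega), mul_add]
    have hT := h (T + 1) (mem_Icc.2 ⟨by omega, le_rfl⟩)
    have ih := ih fun t ht => h t (Icc_subset_Icc_right (Nat.le_succ T) ht)
    push_cast
    linarith

theorem sumo_inner_convergence_general
    {m n r : ℕ}
    (f : Matrix (Fin m) (Fin n) ℝ → ℝ)
    (gradf : Matrix (Fin m) (Fin n) ℝ → Matrix (Fin m) (Fin n) ℝ)
    (hgrad : ∀ W V : Matrix (Fin m) (Fin n) ℝ,
      HasDerivAt (fun s : ℝ => f (W + s • V)) (frobInner (gradf W) V) 0)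
    (β : ℝ) (hβ : 0 ≤ β)
    (hsmooth : ∀ X Y : Matrix (Fin m) (Fin n) ℝ,
      frobNorm (gradf X - gradf Y) ≤ β * frobNorm (X - Y))
    (Q : Matrix (Fin m) (Fin r) ℝ) (hQ : Qᵀ * Q = 1)
    (T : ℕ) (hT : 1 ≤ T)
    (W : ℕ → Matrix (Fin m) (Fin n) ℝ)
    (Ghat M' O : ℕ → Matrix (Fin r) (Fin n) ℝ)
    (Mb : ℝ) (hMb : ∀ X, f (W 1) - f X ≤ Mb)
    (hGhat : ∀ t ∈ Finset.Icc 1 T, Ghat t = Qᵀ * gradf (W t))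
    (hO : ∀ t ∈ Finset.Icc 1 T, frobNorm (O t) ^ 2 ≤ n)
    (η σ : ℝ) (hη : 0 < η)
    (hupdate : ∀ t ∈ Finset.Icc 1 T, W (t + 1) = W t - η • (Q * O t))
    (halign : ∀ t ∈ Finset.Icc 1 T,
      -(frobInner (Ghat t) (O t)) ≤
        -(1 / 4) * frobNorm (Ghat t) ^ 2 + (5 / 2) * frobNorm (Ghat t - M' t))
    (hnoise : ∀ t ∈ Finset.Icc 1 T, frobNorm (Ghat t - M' t) ≤ σ / Real.sqrt m) :
    (1 / (T : ℝ)) * ∑ t ∈ Finset.Icc 1 T, frobNorm (Ghat t) ^ 2 ≤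
      4 * Mb / (η * T) + 10 * σ / Real.sqrt m + 2 * η * β * n := by
  set ε := σ / Real.sqrt m
  set C := η * (5 / 2 * ε) + β / 2 * η ^ 2 * n with hC
  have hstep : ∀ t ∈ Icc 1 T,
      f (W (t + 1)) ≤ f (W t) - η / 4 * frobNorm (Ghat t) ^ 2 + C := fun t ht => by
    have hdesc := apply_sub_smul_mul_le_of_gradient_lipschitz hgrad hsmooth hQ (W t) (O t) η
    rw [← hupdate t ht, ← hGhat t ht] at hdesc
    have halign' : -frobInner (Ghat t) (O t) ≤ -(1 / 4) * frobNorm (Ghat t) ^ 2 + 5 / 2 * ε := by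
      linarith [halign t ht, hnoise t ht]
    have hinner := mul_le_mul_of_nonneg_left halign' hη.le
    have hcurv := mul_le_mul_of_nonneg_left (hO t ht) (by positivity : 0 ≤ β / 2 * η ^ 2)
    linarith
  have hsum := mul_sum_Icc_le_of_le_sub_mul_add (a := fun t => f (W t))
    (b := fun t => frobNorm (Ghat t) ^ 2) T hstep
  have hT₀ : (0 : ℝ) < T := by exact_mod_cast hT
  calc (1 / (T : ℝ)) * ∑ t ∈ Icc 1 T, frobNorm (Ghat t) ^ 2
      = 4 / (η * T) * (η / 4 * ∑ t ∈ Icc 1 T, frobNorm (Ghat t) ^ 2) := by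
        field_simp
    _ ≤ 4 / (η * T) * (Mb + T * C) := by
        gcongr
        linarith [hMb (W (T + 1))]
    _ = 4 * Mb / (η * T) + 10 * σ / Real.sqrt m + 2 * η * β * n := by
        simp only [C, ε]
        field_simp
        ring

/-- **Averaged bound for SUMO's inner fixed low-rank optimization.**
Under β-smoothness, `f(W^(1)) − inf f ≤ M` (encoded as `∀ X, f(W^(1)) − f(X) ≤ M`),
a fixed column-orthonormal `Q`, updates `W^(t+1) = W^(t) − ηQO^(t)` with `‖O^(t)‖_F² ≤ n`,
alignment inequalities, and `‖Ĝ^(t) − M^(t)‖_F ≤ σ/√m`, the averaged squared projected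
gradient norm satisfies `(1/T)Σ ‖Ĝ^(t)‖² ≤ 4M/(ηT) + 10σ/√m + 2ηβn`. -/
theorem sumo_inner_convergence
    {m n r : ℕ}
    (f : Matrix (Fin m) (Fin n) ℝ → ℝ)
    (gradf : Matrix (Fin m) (Fin n) ℝ → Matrix (Fin m) (Fin n) ℝ)
    (hgrad : ∀ W V : Matrix (Fin m) (Fin n) ℝ,
      HasDerivAt (fun s : ℝ => f (W + s • V)) (frobInner (gradf W) V) 0)
    (β : ℝ) (hβ : 0 ≤ β)
    (hsmooth : ∀ X Y : Matrix (Fin m) (Fin n) ℝ,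
      frobNorm (gradf X - gradf Y) ≤ β * frobNorm (X - Y))
    (Q : Matrix (Fin m) (Fin r) ℝ) (hQ : Qᵀ * Q = 1)
    (T : ℕ) (hT : 1 ≤ T)
    (W : ℕ → Matrix (Fin m) (Fin n) ℝ)
    (Ghat M' O : ℕ → Matrix (Fin r) (Fin n) ℝ)
    (Mb : ℝ) (hMb : ∀ X, f (W 1) - f X ≤ Mb)
    (hGhat : ∀ t ∈ Finset.Icc 1 T, Ghat t = Qᵀ * gradf (W t))
    (hO : ∀ t ∈ Finset.Icc 1 T, frobNorm (O t) ^ 2 ≤ n)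
    (η σ : ℝ) (hη : 0 < η) (hσ : 0 ≤ σ)
    (hupdate : ∀ t ∈ Finset.Icc 1 T, W (t + 1) = W t - η • (Q * O t))
    (halign : ∀ t ∈ Finset.Icc 1 T,
      -(frobInner (Ghat t) (O t)) ≤
        -(1 / 4) * frobNorm (Ghat t) ^ 2 + (5 / 2) * frobNorm (Ghat t - M' t))
    (hnoise : ∀ t ∈ Finset.Icc 1 T, frobNorm (Ghat t - M' t) ≤ σ / Real.sqrt m) :
    (1 / (T : ℝ)) * ∑ t ∈ Finset.Icc 1 T, frobNorm (Ghat t) ^ 2 ≤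
      4 * Mb / (η * T) + 10 * σ / Real.sqrt m + 2 * η * β * n :=
  sumo_inner_convergence_general f gradf hgrad β hβ hsmooth Q hQ T hT W Ghat M' O Mb hMb hGhat hO η
    σ hη hupdate halign hnoise
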